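/- The number of distinct element orders in the symmetric group Sym(n) equals 1 plus the sum over k from 1 to n of r(k), where r(k) is the number of unordered partitions of k into pairwise coprime prime powers greater than 1. -/

import Mathlib

/-- The multiset of prime power components of a natural number. -/
noncomputable def ppc (m : ℕ) : Multiset ℕ :=
  m.primeFactors.val.map fun p => p ^ m.factorization p

lemma ppc_sum (m : ℕ) : (ppc m).sum = ∑ p ∈ m.primeFactors, p ^ m.factorization p := rfl

lemma ppc_prod (m : ℕ) (hm : m ≠ 0) : (ppc m).prod = m := by
  have h1 : (ppc m).prod = ∏ p ∈ m.primeFactors, p ^ m.factorization p := rfl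
  rw [h1]
  conv_rhs => rw [← Nat.factorization_prod_pow_eq_self hm]
  rw [Finsupp.prod, Nat.support_factorization]

lemma mem_primeFactors_iff_factorization_ne_zero {m p : ℕ} :
    p ∈ m.primeFactors ↔ m.factorization p ≠ 0 := by
  rw [← Nat.support_factorization, Finsupp.mem_support_iff]

lemma sum_le_prod_of_two_le (S : Finset ℕ) (f : ℕ → ℕ) (h : ∀ x ∈ S, 2 ≤ f x) :
    ∑ x ∈ S, f x ≤ ∏ x ∈ S, f x := by
  induction S using Finset.induction_on with
  | empty => simp
  | @insert x s hx ih =>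
    rw [Finset.sum_insert hx, Finset.prod_insert hx]
    have hfx : 2 ≤ f x := h x (Finset.mem_insert_self _ _)
    have hs : ∀ y ∈ s, 2 ≤ f y := fun y hy => h y (Finset.mem_insert_of_mem hy)
    rcases s.eq_empty_or_nonempty with rfl | ⟨y, hy⟩
    · simp
    · have h2 : 2 ≤ ∏ z ∈ s, f z := by
        calc 2 ≤ f y := hs y hy
        _ ≤ ∑ z ∈ s, f z := Finset.single_le_sum (fun i _ => Nat.zero_le _) hy
        _ ≤ ∏ z ∈ s, f z := ih hs
      calc f x + ∑ z ∈ s, f z ≤ f x + ∏ z ∈ s, f z := by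
            exact Nat.add_le_add_left (ih hs) _
      _ ≤ f x * ∏ z ∈ s, f z := by nlinarith
    
lemma sum_primePow_le (a : ℕ) (ha : a ≠ 0) (S : Finset ℕ) (hS : S ⊆ a.primeFactors) :
    ∑ p ∈ S, p ^ a.factorization p ≤ a := by
  have h2 : ∀ p ∈ S, 2 ≤ p ^ a.factorization p := by
    intro p hp
    have hp' := hS hp
    have hprime : p.Prime := Nat.prime_of_mem_primeFactors hp'
    have hpos : a.factorization p ≠ 0 := mem_primeFactors_iff_factorization_ne_zero.1 hp'
    calc 2 ≤ p := hprime.two_le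
    _ = p ^ 1 := (pow_one p).symm
    _ ≤ p ^ a.factorization p :=
      Nat.pow_le_pow_right hprime.pos (Nat.one_le_iff_ne_zero.2 hpos)
  refine (sum_le_prod_of_two_le S _ h2).trans (Nat.le_of_dvd (Nat.pos_of_ne_zero ha) ?_)
  conv_rhs => rw [← Nat.factorization_prod_pow_eq_self ha]
  rw [Finsupp.prod, Nat.support_factorization]
  exact Finset.prod_dvd_prod_of_subset _ _ _ hS

lemma multiset_lcm_ne_zero (s : Multiset ℕ) (h : ∀ x ∈ s, x ≠ 0) : s.lcm ≠ 0 := by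
  induction s using Multiset.induction_on with
  | empty => simp [Multiset.lcm_zero]
  | cons a s ih =>
    rw [Multiset.lcm_cons, lcm_eq_nat_lcm]
    exact Nat.lcm_ne_zero (h a (Multiset.mem_cons_self _ _))
      (ih fun x hx => h x (Multiset.mem_cons_of_mem hx))

/-- Landau-type inequality: the sum of the prime power components of the lcm of a
multiset of positive naturals is at most the sum of the multiset. -/
lemma landau_ineq (s : Multiset ℕ) (h : ∀ x ∈ s, x ≠ 0) :
    ∑ p ∈ s.lcm.primeFactors, p ^ s.lcm.factorization p ≤ s.sum := by
  induction s using Multiset.induction_on with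
  | empty => simp [Multiset.lcm_zero]
  | cons a s ih =>
    have ha : a ≠ 0 := h a (Multiset.mem_cons_self _ _)
    have hs : ∀ x ∈ s, x ≠ 0 := fun x hx => h x (Multiset.mem_cons_of_mem hx)
    have hL : s.lcm ≠ 0 := multiset_lcm_ne_zero s hs
    rw [Multiset.lcm_cons, lcm_eq_nat_lcm, Multiset.sum_cons]
    set L := s.lcm with hLdef
    have hfac : ∀ p, (Nat.lcm a L).factorization p
        = max (a.factorization p) (L.factorization p) := by
      intro p
      rw [Nat.factorization_lcm ha hL]
      rfl
    set U := (Nat.lcm a L).primeFactors with hU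
    classical
    set S1 := U.filter (fun p => L.factorization p < a.factorization p) with hS1
    set S2 := U.filter (fun p => ¬ L.factorization p < a.factorization p) with hS2
    have hsplit : ∑ p ∈ U, p ^ (Nat.lcm a L).factorization p
        = ∑ p ∈ S1, p ^ (Nat.lcm a L).factorization p
          + ∑ p ∈ S2, p ^ (Nat.lcm a L).factorization p :=
      (Finset.sum_filter_add_sum_filter_not U _ _).symm
    rw [hsplit]
    have hB1 : ∑ p ∈ S1, p ^ (Nat.lcm a L).factorization p ≤ a := by
      have hsub : S1 ⊆ a.primeFactors := by
        intro p hp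
        rw [hS1, Finset.mem_filter] at hp
        obtain ⟨hpU, hlt⟩ := hp
        exact mem_primeFactors_iff_factorization_ne_zero.2 (by omega)
      have heq : ∑ p ∈ S1, p ^ (Nat.lcm a L).factorization p
          = ∑ p ∈ S1, p ^ a.factorization p := by
        refine Finset.sum_congr rfl fun p hp => ?_
        rw [hS1, Finset.mem_filter] at hp
        rw [hfac p, max_eq_left (le_of_lt hp.2)]
      rw [heq]
      exact sum_primePow_le a ha S1 hsub
    have hB2 : ∑ p ∈ S2, p ^ (Nat.lcm a L).factorization p ≤ s.sum := by
      have hsub : S2 ⊆ L.primeFactors := by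
        intro p hp
        rw [hS2, Finset.mem_filter] at hp
        obtain ⟨hpU, hle⟩ := hp
        have hne : (Nat.lcm a L).factorization p ≠ 0 :=
          mem_primeFactors_iff_factorization_ne_zero.1 hpU
        rw [hfac p] at hne
        exact mem_primeFactors_iff_factorization_ne_zero.2 (by omega)
      have heq : ∑ p ∈ S2, p ^ (Nat.lcm a L).factorization p
          = ∑ p ∈ S2, p ^ L.factorization p := by
        refine Finset.sum_congr rfl fun p hp => ?_
        rw [hS2, Finset.mem_filter] at hp
        rw [hfac p, max_eq_right (by omega)]
      rw [heq]
      calc ∑ p ∈ S2, p ^ L.factorization p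
          ≤ ∑ p ∈ L.primeFactors, p ^ L.factorization p :=
        Finset.sum_le_sum_of_subset hsub
      _ ≤ s.sum := ih hs
    omega

lemma multiset_pairwise_map {α β : Type*} {f : α → β} {r : β → β → Prop} {s : Multiset α}
    (h : s.Pairwise fun a b => r (f a) (f b)) : (s.map f).Pairwise r := by
  obtain ⟨l, hl, hlp⟩ := h
  exact ⟨l.map f, by simp [hl], List.pairwise_map.2 hlp⟩

lemma ppc_isPrimePow {m x : ℕ} (hx : x ∈ ppc m) : IsPrimePow x := by
  rw [ppc, Multiset.mem_map] at hx
  obtain ⟨p, hp, rfl⟩ := hx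
  have hp' : p ∈ m.primeFactors := hp
  exact ⟨p, m.factorization p, (Nat.prime_of_mem_primeFactors hp').prime,
    Nat.pos_of_ne_zero (mem_primeFactors_iff_factorization_ne_zero.1 hp'), rfl⟩

lemma ppc_pairwise (m : ℕ) : (ppc m).Pairwise Nat.Coprime := by
  refine multiset_pairwise_map (Multiset.Nodup.pairwise ?_ m.primeFactors.nodup)
  intro p hp q hq hne
  have hp' : Nat.Prime p := Nat.prime_of_mem_primeFactors hp
  have hq' : Nat.Prime q := Nat.prime_of_mem_primeFactors hq
  exact Nat.Coprime.pow _ _ ((Nat.coprime_primes hp' hq').2 hne)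

lemma ppc_prime_pow {p k : ℕ} (hp : p.Prime) (hk : k ≠ 0) : ppc (p ^ k) = {p ^ k} := by
  have h1 : (p ^ k).primeFactors = {p} := by
    rw [← Nat.support_factorization, hp.factorization_pow, Finsupp.support_single_ne_zero _ hk]
  rw [ppc, h1]
  have h2 : (p ^ k).factorization p = k := by
    rw [hp.factorization_pow, Finsupp.single_eq_same]
  show Multiset.map (fun q => q ^ (p ^ k).factorization q) {p} = {p ^ k}
  rw [Multiset.map_singleton, h2]

/-- Uniqueness of coprime prime power factorization, list version. -/
lemma ppc_list_prod (l : List ℕ) (hp : ∀ x ∈ l, IsPrimePow x)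
    (hc : l.Pairwise Nat.Coprime) : ppc l.prod = (l : Multiset ℕ) := by
  induction l with
  | nil => simp [ppc, Nat.primeFactors_one]
  | cons a l ih =>
    obtain ⟨hca, hcl⟩ := List.pairwise_cons.1 hc
    have hpa : IsPrimePow a := hp a List.mem_cons_self
    have hpl : ∀ x ∈ l, IsPrimePow x := fun x hx => hp x (List.mem_cons_of_mem _ hx)
    have ha0 : a ≠ 0 := hpa.pos.ne'
    have hP0 : l.prod ≠ 0 := by
      have : 0 < l.prod := List.prod_pos fun x hx => (hpl x hx).pos
      omega
    have hco : Nat.Coprime a l.prod := Nat.coprime_list_prod_right_iff.2 hca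
    rw [List.prod_cons]
    have hmul0 : a * l.prod ≠ 0 := mul_ne_zero ha0 hP0
    have hpf : (a * l.prod).primeFactors = a.primeFactors ∪ l.prod.primeFactors :=
      Nat.primeFactors_mul ha0 hP0
    have hdisj : Disjoint a.primeFactors l.prod.primeFactors := hco.disjoint_primeFactors
    have hval : (a.primeFactors ∪ l.prod.primeFactors).val
        = a.primeFactors.val + l.prod.primeFactors.val := by
      rw [← Finset.disjUnion_eq_union a.primeFactors l.prod.primeFactors hdisj]
      rfl
    rw [ppc, hpf, hval, Multiset.map_add]
    have hfa : ∀ p ∈ a.primeFactors.val,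
        p ^ (a * l.prod).factorization p = p ^ a.factorization p := by
      intro p hpmem
      have hnotin : p ∉ l.prod.primeFactors := fun hmem =>
        (Finset.disjoint_left.1 hdisj) hpmem hmem
      have h0 : l.prod.factorization p = 0 := by
        by_contra hne
        exact hnotin (mem_primeFactors_iff_factorization_ne_zero.2 hne)
      rw [Nat.factorization_mul ha0 hP0, Finsupp.add_apply, h0, add_zero]
    have hfl : ∀ p ∈ l.prod.primeFactors.val,
        p ^ (a * l.prod).factorization p = p ^ l.prod.factorization p := by
      intro p hpmem
      have hnotin : p ∉ a.primeFactors := fun hmem =>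
        (Finset.disjoint_right.1 hdisj) hpmem hmem
      have h0 : a.factorization p = 0 := by
        by_contra hne
        exact hnotin (mem_primeFactors_iff_factorization_ne_zero.2 hne)
      rw [Nat.factorization_mul ha0 hP0, Finsupp.add_apply, h0, zero_add]
    rw [Multiset.map_congr rfl hfa, Multiset.map_congr rfl hfl]
    have h1 : Multiset.map (fun p => p ^ a.factorization p) a.primeFactors.val = ppc a := rfl
    have h2 : Multiset.map (fun p => p ^ l.prod.factorization p) l.prod.primeFactors.val
        = ppc l.prod := rfl
    rw [h1, h2, ih hpl hcl]
    obtain ⟨p, k, hpp, hk, rfl⟩ := hpa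
    rw [ppc_prime_pow hpp.nat_prime hk.ne']
    rfl

lemma multiset_lcm_eq_prod (l : List ℕ) (hc : l.Pairwise Nat.Coprime)
    (h0 : ∀ x ∈ l, x ≠ 0) : (l : Multiset ℕ).lcm = l.prod := by
  induction l with
  | nil => simp
  | cons a l ih =>
    obtain ⟨hca, hcl⟩ := List.pairwise_cons.1 hc
    have h0' : ∀ x ∈ l, x ≠ 0 := fun x hx => h0 x (List.mem_cons_of_mem _ hx)
    have hco : Nat.Coprime a l.prod := Nat.coprime_list_prod_right_iff.2 hca
    have hcons : ((a :: l : List ℕ) : Multiset ℕ) = a ::ₘ (l : Multiset ℕ) := rfl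
    rw [hcons, Multiset.lcm_cons, lcm_eq_nat_lcm, ih hcl h0', List.prod_cons,
      Nat.Coprime.lcm_eq_mul hco]

/-- `r k` is the number of unordered partitions of `k` into pairwise coprime
prime powers greater than 1, encoded as multisets of parts. -/
noncomputable def nrCoprimePrimePowerPartitions (k : ℕ) : ℕ :=
  Set.ncard {M : Multiset ℕ |
    (∀ x ∈ M, IsPrimePow x) ∧ M.Pairwise Nat.Coprime ∧ M.sum = k}

lemma finite_fixed_sum (k : ℕ) :
    {M : Multiset ℕ | (∀ x ∈ M, 0 < x) ∧ M.sum = k}.Finite := by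
  classical
  have hne : Nonempty (Nat.Partition k) :=
    ⟨⟨Multiset.replicate k 1, fun hi => by simp_all [Multiset.eq_of_mem_replicate hi], by simp⟩⟩
  set f : Multiset ℕ → Nat.Partition k := fun M =>
    if h : (∀ x ∈ M, 0 < x) ∧ M.sum = k then ⟨M, fun hi => h.1 _ hi, h.2⟩
    else Classical.arbitrary _ with hf
  apply Set.Finite.of_finite_image (f := f) (Set.toFinite _)
  intro M1 h1 M2 h2 heq
  have e1 : f M1 = ⟨M1, fun hi => h1.1 _ hi, h1.2⟩ := dif_pos h1
  have e2 : f M2 = ⟨M2, fun hi => h2.1 _ hi, h2.2⟩ := dif_pos h2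
  rw [e1, e2] at heq
  exact congrArg Nat.Partition.parts heq

lemma finite_A (k : ℕ) :
    {M : Multiset ℕ |
      (∀ x ∈ M, IsPrimePow x) ∧ M.Pairwise Nat.Coprime ∧ M.sum = k}.Finite := by
  refine Set.Finite.subset (finite_fixed_sum k) ?_
  rintro M ⟨h1, _, h3⟩
  exact ⟨fun x hx => (h1 x hx).pos, h3⟩

lemma finite_T (n : ℕ) :
    {M : Multiset ℕ |
      (∀ x ∈ M, IsPrimePow x) ∧ M.Pairwise Nat.Coprime ∧ M.sum ≤ n}.Finite := by
  refine Set.Finite.subset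
    (Set.Finite.biUnion (Finset.Iic n).finite_toSet fun k _ => finite_fixed_sum k) ?_
  rintro M ⟨h1, _, h3⟩
  exact Set.mem_biUnion (by simpa using h3) ⟨fun x hx => (h1 x hx).pos, rfl⟩


lemma ncard_biUnion_fixed_sum (s : Finset ℕ) :
    (⋃ k ∈ s, {M : Multiset ℕ |
      (∀ x ∈ M, IsPrimePow x) ∧ M.Pairwise Nat.Coprime ∧ M.sum = k}).ncard
    = ∑ k ∈ s, nrCoprimePrimePowerPartitions k := by
  classical
  induction s using Finset.induction_on with
  | empty => simp
  | @insert a s hx ih =>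
    rw [Finset.set_biUnion_insert, Finset.sum_insert hx, ← ih]
    have hdisj : Disjoint {M : Multiset ℕ |
        (∀ x ∈ M, IsPrimePow x) ∧ M.Pairwise Nat.Coprime ∧ M.sum = a}
        (⋃ k ∈ s, {M : Multiset ℕ |
          (∀ x ∈ M, IsPrimePow x) ∧ M.Pairwise Nat.Coprime ∧ M.sum = k}) := by
      rw [Set.disjoint_left]
      rintro M ⟨_, _, hsa⟩ hMU
      obtain ⟨k, hk, _, _, hsk⟩ := Set.mem_iUnion₂.1 hMU
      exact hx (by rw [hsa.symm.trans hsk]; exact hk)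
    rw [Set.ncard_union_eq hdisj (finite_A a)
      (Set.Finite.biUnion s.finite_toSet fun k _ => finite_A k)]
    rfl

/-- The number of distinct element orders in `Sym(n)` equals
`1 + ∑_{k=1}^{n} r(k)`. -/
theorem nrElementOrders_sym (n : ℕ) (hn : 0 < n) :
    Set.ncard {m : ℕ | ∃ g : Equiv.Perm (Fin n), orderOf g = m} =
      1 + ∑ k ∈ Finset.Icc 1 n, nrCoprimePrimePowerPartitions k := by
  classical
  set S : Set ℕ := {m : ℕ | ∃ g : Equiv.Perm (Fin n), orderOf g = m} with hS
  set T : Set (Multiset ℕ) := {M : Multiset ℕ |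
    (∀ x ∈ M, IsPrimePow x) ∧ M.Pairwise Nat.Coprime ∧ M.sum ≤ n} with hT
  have himg : ppc '' S = T := by
    ext M
    constructor
    · rintro ⟨m, ⟨g, rfl⟩, rfl⟩
      refine ⟨fun x hx => ppc_isPrimePow hx, ppc_pairwise _, ?_⟩
      rw [ppc_sum, ← Equiv.Perm.lcm_cycleType g]
      calc ∑ p ∈ g.cycleType.lcm.primeFactors, p ^ g.cycleType.lcm.factorization p
          ≤ g.cycleType.sum := landau_ineq _ (fun x hx => by
            have := Equiv.Perm.two_le_of_mem_cycleType hx; omega)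
        _ = g.support.card := Equiv.Perm.sum_cycleType g
        _ ≤ n := by simpa using g.support.card_le_univ
    · rintro ⟨hpp, hpc, hsum⟩
      obtain ⟨l, hl, hlp⟩ := id hpc
      have hppl : ∀ x ∈ l, IsPrimePow x := by
        intro x hx
        exact hpp x (by rw [hl]; exact_mod_cast hx)
      obtain ⟨g, hgc⟩ : ∃ g : Equiv.Perm (Fin n), g.cycleType = M :=
        (Equiv.Perm.exists_with_cycleType_iff (Fin n)).2
          ⟨by simpa using hsum, fun a ha => (hpp a ha).two_le⟩
      refine ⟨orderOf g, ⟨g, rfl⟩, ?_⟩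
      have hcoe : (↑l : Multiset ℕ).prod = l.prod := by
        simp
      have h1 : orderOf g = l.prod := by
        rw [← Equiv.Perm.lcm_cycleType, hgc, hl,
          multiset_lcm_eq_prod l hlp (fun x hx => ((hppl x hx).pos).ne')]
      rw [h1, ppc_list_prod l hppl hlp, hl]
  have hinj : Set.InjOn ppc S := by
    rintro m1 h1 m2 h2 heq
    obtain ⟨g1, rfl⟩ := h1
    obtain ⟨g2, rfl⟩ := h2
    have e1 := ppc_prod _ (orderOf_pos g1).ne'
    have e2 := ppc_prod _ (orderOf_pos g2).ne'
    rw [← e1, ← e2, heq]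
  have hdecomp : T = {(0 : Multiset ℕ)} ∪ ⋃ k ∈ Finset.Icc 1 n, {M : Multiset ℕ |
      (∀ x ∈ M, IsPrimePow x) ∧ M.Pairwise Nat.Coprime ∧ M.sum = k} := by
    ext M
    constructor
    · rintro ⟨hpp, hpc, hsum⟩
      rcases eq_or_ne M 0 with rfl | hne
      · exact Or.inl rfl
      · refine Or.inr (Set.mem_iUnion₂.2 ⟨M.sum, ?_, hpp, hpc, rfl⟩)
        obtain ⟨x, hx⟩ := Multiset.exists_mem_of_ne_zero hne
        have hx2 : 2 ≤ x := (hpp x hx).two_le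
        have hxle : x ≤ M.sum := Multiset.single_le_sum (fun _ _ => Nat.zero_le _) x hx
        rw [Finset.mem_Icc]
        omega
    · rintro (rfl | hMU)
      · exact ⟨fun x hx => absurd hx (Multiset.notMem_zero x),
          Multiset.pairwise_zero _, le_of_eq_of_le Multiset.sum_zero (Nat.zero_le n)⟩
      · obtain ⟨k, hk, hpp, hpc, hsk⟩ := Set.mem_iUnion₂.1 hMU
        refine ⟨hpp, hpc, ?_⟩
        simp only [Finset.mem_Icc] at hk
        omega
  calc S.ncard = (ppc '' S).ncard := (Set.ncard_image_of_injOn hinj).symm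
    _ = T.ncard := by rw [himg]
    _ = 1 + ∑ k ∈ Finset.Icc 1 n, nrCoprimePrimePowerPartitions k := by
        rw [hdecomp]
        have hdisj : Disjoint ({(0 : Multiset ℕ)} : Set (Multiset ℕ))
            (⋃ k ∈ Finset.Icc 1 n, {M : Multiset ℕ |
              (∀ x ∈ M, IsPrimePow x) ∧ M.Pairwise Nat.Coprime ∧ M.sum = k}) := by
          rw [Set.disjoint_left]
          rintro M rfl hMU
          obtain ⟨k, hk, _, _, hsk⟩ := Set.mem_iUnion₂.1 hMU
          simp only [Finset.mem_Icc] at hk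
          simp at hsk
          omega
        rw [Set.ncard_union_eq hdisj (Set.finite_singleton _)
          (Set.Finite.biUnion (Finset.Icc 1 n).finite_toSet fun k _ => finite_A k),
          Set.ncard_singleton, ncard_biUnion_fixed_sum]
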